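/- For every positive integer n, the function u_n(x1,x2,t) = exp(-λ_n² t)·sin(4nπ x1)·sin(4nπ x2) with λ_n = 4nπ√2 satisfies the heat equation ∂_t u_n - Δu_n = 0 on ℝ² × ℝ, and u_n vanishes on the boundary of the square S = (0,1)×(0,1) as well as on the boundary of the square S̃ = (1/4,3/4)×(1/4,3/4) for all times t. -/

import Mathlib

open Real

/-! Separation of variables: `sin (a x)` is an eigenfunction of `d²/dx²` with eigenvalue `-a²`,
so `exp (-(a² + b²) t) sin (a x₁) sin (b x₂)` solves the heat equation; and `sin (4nπ x)`
vanishes whenever `4x` is an integer, in particular at `0, 1/4, 3/4, 1`. -/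

lemma hasDerivAt_sin_const_mul (a x : ℝ) :
    HasDerivAt (fun y => sin (a * y)) (a * cos (a * x)) x := by
  simpa [mul_comm] using ((hasDerivAt_id x).const_mul a).sin

lemma deriv_deriv_sin_const_mul (a x : ℝ) :
    deriv (fun y => deriv (fun z => sin (a * z)) y) x = -a ^ 2 * sin (a * x) := by
  have hcos : HasDerivAt (fun y => cos (a * y)) (-(a * sin (a * x))) x := by
    simpa [mul_comm] using ((hasDerivAt_id x).const_mul a).cos
  simp only [fun y => (hasDerivAt_sin_const_mul a y).deriv]
  rw [(hcos.const_mul a).deriv]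
  ring

noncomputable def sinSinMode (a b : ℝ) (x₁ x₂ t : ℝ) : ℝ :=
  exp (-(a ^ 2 + b ^ 2) * t) * sin (a * x₁) * sin (b * x₂)

lemma sinSinMode_heat_eq (a b x₁ x₂ t : ℝ) :
    deriv (fun s => sinSinMode a b x₁ x₂ s) t -
      (deriv (fun y => deriv (fun z => sinSinMode a b z x₂ t) y) x₁ +
        deriv (fun y => deriv (fun z => sinSinMode a b x₁ z t) y) x₂) = 0 := by
  have hexp : HasDerivAt (fun s => exp (-(a ^ 2 + b ^ 2) * s))
      (exp (-(a ^ 2 + b ^ 2) * t) * -(a ^ 2 + b ^ 2)) t := by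
    simpa only [mul_one, id] using ((hasDerivAt_id t).const_mul (-(a ^ 2 + b ^ 2))).exp
  have ht := (hexp.mul_const (sin (a * x₁))).mul_const (sin (b * x₂))
  simp only [sinSinMode, deriv_mul_const_field', deriv_const_mul_field',
    deriv_deriv_sin_const_mul, ht.deriv]
  ring

lemma sin_nat_mul_pi_mul_eq_zero_of_four_mul_eq_int (n : ℕ) {x : ℝ} (k : ℤ) (hx : 4 * x = k) :
    sin (4 * n * π * x) = 0 := by
  rw [show 4 * n * π * x = ((n * k : ℤ) : ℝ) * π by push_cast; rw [← hx]; ring]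
  exact sin_int_mul_pi _

theorem stmt_0_general (n : ℕ)
    (lam : ℝ) (hlam : lam = 4 * n * π * Real.sqrt 2)
    (u : ℝ → ℝ → ℝ → ℝ)
    (hu : ∀ x1 x2 t, u x1 x2 t =
      Real.exp (-(lam ^ 2) * t) * Real.sin (4 * n * π * x1) * Real.sin (4 * n * π * x2)) :
    (∀ x1 x2 t,
      deriv (fun s => u x1 x2 s) t -
        (deriv (fun y => deriv (fun z => u z x2 t) y) x1 +
         deriv (fun y => deriv (fun z => u x1 z t) y) x2) = 0) ∧
    (∀ x1 x2 t, ((x1 = 0 ∨ x1 = 1) ∧ x2 ∈ Set.Icc (0:ℝ) 1) ∨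
        ((x2 = 0 ∨ x2 = 1) ∧ x1 ∈ Set.Icc (0:ℝ) 1) → u x1 x2 t = 0) ∧
    (∀ x1 x2 t, ((x1 = 1/4 ∨ x1 = 3/4) ∧ x2 ∈ Set.Icc (1/4:ℝ) (3/4)) ∨
        ((x2 = 1/4 ∨ x2 = 3/4) ∧ x1 ∈ Set.Icc (1/4:ℝ) (3/4)) → u x1 x2 t = 0) := by
  have hlam_sq : lam ^ 2 = (4 * n * π) ^ 2 + (4 * n * π) ^ 2 := by
    rw [hlam, mul_pow, sq_sqrt zero_le_two]; ring
  have hu' : u = sinSinMode (4 * n * π) (4 * n * π) := by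
    funext x1 x2 t; rw [hu, hlam_sq, sinSinMode]
  have hsin : ∀ x : ℝ, x = 0 ∨ x = 1 ∨ x = 1/4 ∨ x = 3/4 → sin (4 * n * π * x) = 0 := by
    rintro x (rfl | rfl | rfl | rfl)
    exacts [sin_nat_mul_pi_mul_eq_zero_of_four_mul_eq_int n 0 (by norm_num),
      sin_nat_mul_pi_mul_eq_zero_of_four_mul_eq_int n 4 (by norm_num),
      sin_nat_mul_pi_mul_eq_zero_of_four_mul_eq_int n 1 (by norm_num),
      sin_nat_mul_pi_mul_eq_zero_of_four_mul_eq_int n 3 (by norm_num)]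
  refine ⟨fun x1 x2 t => hu' ▸ sinSinMode_heat_eq _ _ x1 x2 t, ?_, ?_⟩ <;>
    rintro x1 x2 t (⟨hx1, -⟩ | ⟨hx2, -⟩)
  all_goals first
    | rw [hu, hsin x1 (by tauto), mul_zero, zero_mul]
    | rw [hu, hsin x2 (by tauto), mul_zero]

/-- For every positive integer `n`, the function
`u_n(x₁,x₂,t) = exp(-λ_n² t) sin(4nπ x₁) sin(4nπ x₂)` with `λ_n = 4nπ√2`
satisfies the heat equation `∂_t u - Δ u = 0` on `ℝ² × ℝ`, and vanishes on the
boundaries of the squares `S = (0,1)²` and `S̃ = (1/4,3/4)²` for all times. -/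
theorem stmt_0 (n : ℕ) (hn : 0 < n)
    (lam : ℝ) (hlam : lam = 4 * n * π * Real.sqrt 2)
    (u : ℝ → ℝ → ℝ → ℝ)
    (hu : ∀ x1 x2 t, u x1 x2 t =
      Real.exp (-(lam ^ 2) * t) * Real.sin (4 * n * π * x1) * Real.sin (4 * n * π * x2)) :
    (∀ x1 x2 t,
      deriv (fun s => u x1 x2 s) t -
        (deriv (fun y => deriv (fun z => u z x2 t) y) x1 +
         deriv (fun y => deriv (fun z => u x1 z t) y) x2) = 0) ∧
    (∀ x1 x2 t, ((x1 = 0 ∨ x1 = 1) ∧ x2 ∈ Set.Icc (0:ℝ) 1) ∨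
        ((x2 = 0 ∨ x2 = 1) ∧ x1 ∈ Set.Icc (0:ℝ) 1) → u x1 x2 t = 0) ∧
    (∀ x1 x2 t, ((x1 = 1/4 ∨ x1 = 3/4) ∧ x2 ∈ Set.Icc (1/4:ℝ) (3/4)) ∨
        ((x2 = 1/4 ∨ x2 = 3/4) ∧ x1 ∈ Set.Icc (1/4:ℝ) (3/4)) → u x1 x2 t = 0) :=
  stmt_0_general n lam hlam u hu
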